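/- For reals k > 2 and W > 0, define for j ≥ 0 the points N_j = W^(1/k)·(1 + 2^(−jq))^(−1/k) where q = k/(k−1). Then the derivative of u ↦ −h(W−u^k)^(1/k) at u = N_j equals h·2^j for every h > 0, and there exist constants c, C > 0 (depending only on k) such that c·2^(−jq)·W^(1/k) ≤ N_{j+1} − N_j ≤ C·2^(−jq)·W^(1/k) for all j ≥ 0. -/

import Mathlib

/-!
Write `t = 2^(-j q)`, so that `N_j = (W / (1 + t))^(1/k)` and `W - N_j^k = t N_j^k`. The derivative
`h N^(k-1) (W - N^k)^(1/k-1)` is then `h ((W - N^k) / N^k)^(1/k-1) = h t^(1/k-1)`, and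
`q (1 - 1/k) = 1` turns this into `h 2^j`.

For the spacing, `t_{j+1} = 2^(-q) t_j` and `N_{j+1} - N_j = W^(1/k) (f(t_{j+1}) - f(t_j))` with
`f(x) = (1 + x)^(-1/k)`. On `[0, 1]` the slope `|f'(x)| = (1/k) (1 + x)^(-1/k-1)` lies between
`(1/k) 2^(-1/k-1)` and `1/k`, so by the mean value theorem the gap is comparable to
`(1 - 2^(-q)) t_j`.
-/

open Real Set

theorem hasDerivAt_one_add_rpow_neg (p : ℝ) {x : ℝ} (hx : -1 < x) :
    HasDerivAt (fun z : ℝ => (1 + z) ^ (-p)) (-p * (1 + x) ^ (-p - 1)) x := by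
  simpa using ((hasDerivAt_id x).const_add 1).rpow_const (p := -p)
    (Or.inl (by simp only [id]; linarith))

theorem exists_one_add_rpow_neg_sub_eq (p : ℝ) {x y : ℝ} (hx : -1 < x) (hxy : x < y) :
    ∃ ξ ∈ Ioo x y, (1 + x) ^ (-p) - (1 + y) ^ (-p) = p * (1 + ξ) ^ (-p - 1) * (y - x) := by
  have hderiv : ∀ z ∈ Icc x y,
      HasDerivAt (fun z : ℝ => (1 + z) ^ (-p)) (-p * (1 + z) ^ (-p - 1)) z :=
    fun z hz => hasDerivAt_one_add_rpow_neg p (hx.trans_le hz.1)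
  obtain ⟨ξ, hξ, hslope⟩ := exists_hasDerivAt_eq_slope _ _ hxy
    (fun z hz => (hderiv z hz).continuousAt.continuousWithinAt)
    (fun z hz => hderiv z (Ioo_subset_Icc_self hz))
  refine ⟨ξ, hξ, ?_⟩
  rw [eq_div_iff (sub_ne_zero.2 hxy.ne')] at hslope
  linarith

theorem one_add_rpow_neg_sub_bounds {p x y : ℝ} (hp : 0 ≤ p) (hx : 0 ≤ x) (hxy : x < y)
    (hy : y ≤ 1) :
    p * 2 ^ (-p - 1) * (y - x) ≤ (1 + x) ^ (-p) - (1 + y) ^ (-p) ∧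
      (1 + x) ^ (-p) - (1 + y) ^ (-p) ≤ p * (y - x) := by
  obtain ⟨ξ, ⟨hxξ, hξy⟩, hξ⟩ := exists_one_add_rpow_neg_sub_eq p (by linarith) hxy
  have hexp : -p - 1 ≤ 0 := by linarith
  have hlow : (2 : ℝ) ^ (-p - 1) ≤ (1 + ξ) ^ (-p - 1) :=
    rpow_le_rpow_of_nonpos (by linarith) (by linarith) hexp
  have hup : (1 + ξ) ^ (-p - 1) ≤ 1 := rpow_le_one_of_one_le_of_nonpos (by linarith) hexp
  have hyx : 0 ≤ y - x := by linarith
  rw [hξ]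
  constructor
  · gcongr
  · calc p * (1 + ξ) ^ (-p - 1) * (y - x) ≤ p * 1 * (y - x) := by gcongr
      _ = p * (y - x) := by ring

theorem hasDerivAt_neg_mul_sub_rpow_rpow_inv (h : ℝ) {k W u : ℝ} (hk : k ≠ 0) (hu : u ≠ 0)
    (hWu : W - u ^ k ≠ 0) :
    HasDerivAt (fun u : ℝ => -h * (W - u ^ k) ^ (1 / k))
      (h * (u ^ (k - 1) * (W - u ^ k) ^ (1 / k - 1))) u := by
  have hinner : HasDerivAt (fun u : ℝ => W - u ^ k) (-(k * u ^ (k - 1))) u := by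
    simpa using (hasDerivAt_rpow_const (p := k) (Or.inl hu)).const_sub W
  refine ((hinner.rpow_const (p := 1 / k) (Or.inl hWu)).const_mul (-h)).congr_deriv ?_
  field_simp

theorem rpow_sub_one_mul_rpow_inv_sub_one {k N a : ℝ} (hk : k ≠ 0) (hN : 0 < N) (ha : 0 ≤ a) :
    N ^ (k - 1) * a ^ (1 / k - 1) = (a / N ^ k) ^ (1 / k - 1) := by
  rw [div_rpow ha (rpow_nonneg hN.le _), ← rpow_mul hN.le, div_eq_mul_inv _ (N ^ _),
    ← rpow_neg hN.le, mul_comm]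
  congr 2
  field_simp
  ring

theorem deriv_neg_mul_sub_rpow_rpow_inv_at (h : ℝ) {k W t : ℝ} (hk : k ≠ 0) (hW : 0 < W)
    (ht : 0 < t) :
    deriv (fun u : ℝ => -h * (W - u ^ k) ^ (1 / k)) (W ^ (1 / k) * (1 + t) ^ (-(1 / k))) =
      h * t ^ (1 / k - 1) := by
  rw [rpow_neg (by positivity), ← div_eq_mul_inv, ← div_rpow hW.le (by positivity)]
  set N := (W / (1 + t)) ^ (1 / k)
  have hN : 0 < N := by positivity
  have hNk : N ^ k = W / (1 + t) := by
    rw [← rpow_mul (by positivity), one_div_mul_cancel hk, rpow_one]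
  have hWN : W - N ^ k = t * N ^ k := by
    rw [hNk]; field_simp; ring
  have hratio : (W - N ^ k) / N ^ k = t := by
    rw [hWN, mul_div_assoc, div_self (by positivity), mul_one]
  rw [(hasDerivAt_neg_mul_sub_rpow_rpow_inv h hk hN.ne' (by rw [hWN]; positivity)).deriv,
    rpow_sub_one_mul_rpow_inv_sub_one hk hN (by rw [hWN]; positivity), hratio]

theorem stmt_10 (k : ℝ) (hk : 2 < k) :
    (∀ W : ℝ, 0 < W → ∀ j : ℕ, ∀ h : ℝ, 0 < h →
        deriv (fun u : ℝ => -h * (W - u ^ k) ^ (1 / k))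
            (W ^ (1 / k) * (1 + (2 : ℝ) ^ (-(j : ℝ) * (k / (k - 1)))) ^ (-(1 / k))) =
          h * 2 ^ j) ∧
      ∃ c C : ℝ, 0 < c ∧ 0 < C ∧ ∀ W : ℝ, 0 < W → ∀ j : ℕ,
        c * (2 : ℝ) ^ (-(j : ℝ) * (k / (k - 1))) * W ^ (1 / k) ≤
            W ^ (1 / k) * (1 + (2 : ℝ) ^ (-((j : ℝ) + 1) * (k / (k - 1)))) ^ (-(1 / k)) -
              W ^ (1 / k) * (1 + (2 : ℝ) ^ (-(j : ℝ) * (k / (k - 1)))) ^ (-(1 / k)) ∧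
          W ^ (1 / k) * (1 + (2 : ℝ) ^ (-((j : ℝ) + 1) * (k / (k - 1)))) ^ (-(1 / k)) -
              W ^ (1 / k) * (1 + (2 : ℝ) ^ (-(j : ℝ) * (k / (k - 1)))) ^ (-(1 / k)) ≤
            C * (2 : ℝ) ^ (-(j : ℝ) * (k / (k - 1))) * W ^ (1 / k) := by
  have hk0 : 0 < k := by linarith
  have hk1 : 0 < k - 1 := by linarith
  set q := k / (k - 1)
  refine ⟨fun W hW j h _ => ?_, ?_⟩
  · rw [deriv_neg_mul_sub_rpow_rpow_inv_at h hk0.ne' hW (by positivity),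
      ← rpow_mul zero_le_two, ← rpow_natCast]
    congr 2
    simp only [q]
    field_simp
    ring
  set s : ℝ := 2 ^ (-q)
  have hs : s < 1 := rpow_lt_one_of_one_lt_of_neg one_lt_two (neg_neg_of_pos (by positivity))
  have hs' : 0 < 1 - s := sub_pos.2 hs
  refine ⟨1 / k * 2 ^ (-(1 / k) - 1) * (1 - s), 1 / k * (1 - s), by positivity, by positivity,
    fun W hW j => ?_⟩
  set t : ℝ := 2 ^ (-(j : ℝ) * q)
  have ht : t ≤ 1 := rpow_le_one_of_one_le_of_nonpos one_le_two
    (mul_nonpos_of_nonpos_of_nonneg (neg_nonpos.2 j.cast_nonneg) (by positivity))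
  have hst : (2 : ℝ) ^ (-((j : ℝ) + 1) * q) = s * t := by
    rw [← rpow_add two_pos]; ring_nf
  obtain ⟨hlow, hup⟩ := one_add_rpow_neg_sub_bounds (p := 1 / k) (x := s * t) (y := t)
    (by positivity) (by positivity) (mul_lt_of_lt_one_left (by positivity) hs) ht
  have hWk : 0 ≤ W ^ (1 / k) := by positivity
  rw [hst, ← mul_sub]
  constructor
  · linarith [mul_le_mul_of_nonneg_left hlow hWk]
  · linarith [mul_le_mul_of_nonneg_left hup hWk]
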